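/- Let N ≥ 3, 0 < μ < 2, α ∈ ℝ, and m > 0. Then the constrained energy functional is bounded from below: inf { E[Ψ] : Ψ ∈ ℰ, M[Ψ] = m } > -∞, where the infimum is taken over the energy space ℰ of the star graph. -/

import Mathlib

/-!
Write `A = ∫ |f|²` and `B = ∫ |f'|²` on the half-line. For every window length `L > 0` and
weight `ε > 0`, some point of `(x, x + L]` has `|f|² ≤ A / L`, and AM-GM bounds the increment of
`f` over the window by `(ε B + L / ε) / 2`. Choosing `L` and `ε` as powers of `(K + 1)^{1/4}`,
`K` the kinetic energy, gives `‖ψ‖_∞ ≤ (√M + 1) (K + 1)^{1/4}` on every edge at mass `M`.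
At fixed mass the nonlinear term is therefore `O((K + 1)^{μ/2})` and the vertex term
`O((K + 1)^{1/2})`; for `μ < 2` both exponents are below `1`, so Young's inequality absorbs them
into `K / 2`.
-/

open Real MeasureTheory

/-- An element of the energy space `ℰ` of the star graph with `N` edges: an `N`-tuple of
`H¹(0,∞)` functions (each recorded together with its derivative and recovered from it by the
fundamental theorem of calculus, i.e. each component is absolutely continuous on `[0,∞)` with
`L²` derivative), all attaining the same value `vtx` at the vertex. -/
structure EnergyElem (N : ℕ) where
  ψ : Fin N → ℝ → ℂ
  ψ' : Fin N → ℝ → ℂ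
  vtx : ℂ
  mem_L2 : ∀ i, MemLp (ψ i) 2 (volume.restrict (Set.Ioi (0 : ℝ)))
  deriv_mem_L2 : ∀ i, MemLp (ψ' i) 2 (volume.restrict (Set.Ioi (0 : ℝ)))
  deriv_locInt : ∀ i, ∀ x : ℝ, 0 ≤ x → IntervalIntegrable (ψ' i) volume 0 x
  fund_thm : ∀ i, ∀ x : ℝ, 0 ≤ x → ψ i x = ψ i 0 + ∫ s in (0 : ℝ)..x, ψ' i s
  vertex : ∀ i, ψ i 0 = vtx

/-- The mass `M[Ψ] = Σ_i ∫_0^∞ |ψ_i|² dx`. -/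
noncomputable def massOf {N : ℕ} (P : EnergyElem N) : ℝ :=
  ∑ i : Fin N, ∫ x in Set.Ioi (0 : ℝ), ‖P.ψ i x‖ ^ 2

/-- The kinetic term `‖Ψ'‖² = Σ_i ∫_0^∞ |ψ_i′|² dx`. -/
noncomputable def kineticOf {N : ℕ} (P : EnergyElem N) : ℝ :=
  ∑ i : Fin N, ∫ x in Set.Ioi (0 : ℝ), ‖P.ψ' i x‖ ^ 2

/-- The nonlinear term `‖Ψ‖_{2μ+2}^{2μ+2} = Σ_i ∫_0^∞ |ψ_i|^{2μ+2} dx`. -/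
noncomputable def potOf {N : ℕ} (μ : ℝ) (P : EnergyElem N) : ℝ :=
  ∑ i : Fin N, ∫ x in Set.Ioi (0 : ℝ), ‖P.ψ i x‖ ^ (2 * μ + 2)

/-- The NLS energy `E[Ψ] = (1/2)‖Ψ'‖² - (1/(2μ+2))‖Ψ‖_{2μ+2}^{2μ+2} + (α/2)|ψ(0)|²`. -/
noncomputable def energyOf {N : ℕ} (μ α : ℝ) (P : EnergyElem N) : ℝ :=
  (1 / 2) * kineticOf P - (1 / (2 * μ + 2)) * potOf μ P
    + (α / 2) * ‖P.vtx‖ ^ 2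

open Set

theorem exists_mul_rpow_le_add {c θ : ℝ} (hc : 0 ≤ c) (hθ₀ : 0 ≤ θ) (hθ₁ : θ < 1) :
    ∃ C, ∀ u, 0 ≤ u → c * u ^ θ ≤ u + C := by
  refine ⟨c ^ (1 - θ)⁻¹, fun u hu => ?_⟩
  have hC : 0 ≤ c ^ (1 - θ)⁻¹ := rpow_nonneg hc _
  have young := geom_mean_le_arith_mean2_weighted hθ₀ (sub_nonneg.2 hθ₁.le) hu hC
    (add_sub_cancel θ 1)
  rw [rpow_inv_rpow hc (sub_ne_zero.2 hθ₁.ne')] at young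
  nlinarith [mul_nonneg (sub_nonneg.2 hθ₁.le) hu, mul_nonneg hθ₀ hC]

theorem exists_mem_Ioc_le_integral_div {φ : ℝ → ℝ} {a x L : ℝ} (hφ : ∀ y, 0 ≤ φ y)
    (hint : IntegrableOn φ (Ioi a)) (hx : a ≤ x) (hL : 0 < L) :
    ∃ y ∈ Ioc x (x + L), φ y ≤ (∫ y in Ioi a, φ y) / L := by
  have hsub : Ioc x (x + L) ⊆ Ioi a := fun y hy => hx.trans_lt hy.1
  have hvol : volume (Ioc x (x + L)) = ENNReal.ofReal L := by simp
  obtain ⟨y, hy, hφy⟩ := exists_le_setAverage (by simp [hvol, hL]) (by simp [hvol])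
    (hint.mono_set hsub)
  refine ⟨y, hy, hφy.trans ?_⟩
  rw [setAverage_eq, measureReal_def, hvol, ENNReal.toReal_ofReal hL.le, smul_eq_mul,
    inv_mul_eq_div]
  exact div_le_div_of_nonneg_right
    (setIntegral_mono_set hint (.of_forall hφ) hsub.eventuallyLE) hL.le

theorem setIntegral_Ioc_norm_le_of_sq {E : Type*} [NormedAddCommGroup E] {g : ℝ → E} {x y ε : ℝ}
    (hxy : x ≤ y) (hε : 0 < ε) (hg : IntegrableOn (fun s => ‖g s‖ ^ 2) (Ioc x y)) :
    ∫ s in Ioc x y, ‖g s‖ ≤ (ε * (∫ s in Ioc x y, ‖g s‖ ^ 2) + (y - x) / ε) / 2 := by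
  have hconst : IntegrableOn (fun _ => ε⁻¹) (Ioc x y) := integrableOn_const measure_Ioc_lt_top.ne
  calc ∫ s in Ioc x y, ‖g s‖ ≤ ∫ s in Ioc x y, (ε * ‖g s‖ ^ 2 + ε⁻¹) / 2 := by
        refine integral_mono_of_nonneg (.of_forall fun s => norm_nonneg _)
          (((hg.const_mul ε).add hconst).div_const 2) (.of_forall fun s => ?_)
        have amgm : ε * (2 * ‖g s‖) ≤ ε * (ε * ‖g s‖ ^ 2 + ε⁻¹) := by
          rw [mul_add, mul_inv_cancel₀ hε.ne']
          nlinarith [sq_nonneg (ε * ‖g s‖ - 1)]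
        show ‖g s‖ ≤ (ε * ‖g s‖ ^ 2 + ε⁻¹) / 2
        linarith [le_of_mul_le_mul_left amgm hε]
    _ = (ε * (∫ s in Ioc x y, ‖g s‖ ^ 2) + (y - x) / ε) / 2 := by
        rw [integral_div, integral_add (hg.const_mul ε) hconst, integral_const_mul,
          setIntegral_const, measureReal_def, volume_Ioc, ENNReal.toReal_ofReal (by linarith),
          smul_eq_mul, div_eq_mul_inv (y - x)]

theorem norm_le_of_eq_add_integral {E : Type*} [NormedAddCommGroup E] [NormedSpace ℝ E]
    {f g : ℝ → E} (hf : IntegrableOn (fun x => ‖f x‖ ^ 2) (Ioi 0))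
    (hg : IntegrableOn (fun x => ‖g x‖ ^ 2) (Ioi 0))
    (hg_loc : ∀ x, 0 ≤ x → IntervalIntegrable g volume 0 x)
    (hfg : ∀ x, 0 ≤ x → f x = f 0 + ∫ s in (0 : ℝ)..x, g s) {x L ε : ℝ} (hx : 0 ≤ x)
    (hL : 0 < L) (hε : 0 < ε) :
    ‖f x‖ ≤ √((∫ y in Ioi 0, ‖f y‖ ^ 2) / L) + (ε * (∫ y in Ioi 0, ‖g y‖ ^ 2) + L / ε) / 2 := by
  obtain ⟨y, ⟨hxy, hyL⟩, hfy⟩ :=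
    exists_mem_Ioc_le_integral_div (fun y => sq_nonneg ‖f y‖) hf hx hL
  have hy : 0 ≤ y := hx.trans hxy.le
  have hsub : Ioc x y ⊆ Ioi 0 := fun z hz => hx.trans_lt hz.1
  have hincr : ‖f x - f y‖ ≤ (ε * (∫ y in Ioi 0, ‖g y‖ ^ 2) + L / ε) / 2 :=
    calc ‖f x - f y‖ = ‖∫ s in x..y, g s‖ := by
          rw [norm_sub_rev, hfg y hy, hfg x hx, add_sub_add_left_eq_sub,
            intervalIntegral.integral_interval_sub_left (hg_loc y hy) (hg_loc x hx)]
      _ ≤ ∫ s in Ioc x y, ‖g s‖ := by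
          rw [intervalIntegral.integral_of_le hxy.le]
          exact norm_integral_le_integral_norm g
      _ ≤ (ε * (∫ s in Ioc x y, ‖g s‖ ^ 2) + (y - x) / ε) / 2 :=
          setIntegral_Ioc_norm_le_of_sq hxy.le hε (hg.mono_set hsub)
      _ ≤ (ε * (∫ y in Ioi 0, ‖g y‖ ^ 2) + L / ε) / 2 := by
          gcongr
          · exact .of_forall fun _ => sq_nonneg _
          · linarith
  have hfy' : ‖f y‖ ≤ √((∫ y in Ioi 0, ‖f y‖ ^ 2) / L) := le_sqrt_of_sq_le hfy
  calc ‖f x‖ ≤ ‖f y‖ + ‖f x - f y‖ := norm_le_norm_add_norm_sub' (f x) (f y)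
    _ ≤ _ := add_le_add hfy' hincr

theorem integral_norm_rpow_add_two_le {α E : Type*} [MeasurableSpace α] [NormedAddCommGroup E]
    {ν : Measure α} {f : α → E} {p M : ℝ} (hp : 0 ≤ p)
    (hf : Integrable (fun x => ‖f x‖ ^ 2) ν) (hM : ∀ᵐ x ∂ν, ‖f x‖ ≤ M) :
    ∫ x, ‖f x‖ ^ (p + 2) ∂ν ≤ M ^ p * ∫ x, ‖f x‖ ^ 2 ∂ν := by
  rw [← integral_const_mul]
  refine integral_mono_of_nonneg (.of_forall fun x => by positivity) (hf.const_mul _) ?_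
  filter_upwards [hM] with x hx
  calc ‖f x‖ ^ (p + 2) = ‖f x‖ ^ p * ‖f x‖ ^ 2 := by
        rw [rpow_add' (norm_nonneg _) (by positivity), rpow_two]
    _ ≤ M ^ p * ‖f x‖ ^ 2 := by gcongr

namespace EnergyElem

variable {N : ℕ} (P : EnergyElem N)

theorem integrableOn_norm_ψ_sq (i : Fin N) : IntegrableOn (fun x => ‖P.ψ i x‖ ^ 2) (Ioi 0) :=
  (P.mem_L2 i).integrable_norm_pow two_ne_zero

theorem integrableOn_norm_ψ'_sq (i : Fin N) : IntegrableOn (fun x => ‖P.ψ' i x‖ ^ 2) (Ioi 0) :=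
  (P.deriv_mem_L2 i).integrable_norm_pow two_ne_zero

theorem integral_norm_ψ_sq_le_massOf (i : Fin N) :
    ∫ x in Ioi 0, ‖P.ψ i x‖ ^ 2 ≤ massOf P :=
  Finset.single_le_sum (f := fun j => ∫ x in Ioi 0, ‖P.ψ j x‖ ^ 2)
    (fun _ _ => integral_nonneg fun _ => sq_nonneg _) (Finset.mem_univ i)

theorem integral_norm_ψ'_sq_le_kineticOf (i : Fin N) :
    ∫ x in Ioi 0, ‖P.ψ' i x‖ ^ 2 ≤ kineticOf P :=
  Finset.single_le_sum (f := fun j => ∫ x in Ioi 0, ‖P.ψ' j x‖ ^ 2)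
    (fun _ _ => integral_nonneg fun _ => sq_nonneg _) (Finset.mem_univ i)

theorem kineticOf_nonneg : 0 ≤ kineticOf P :=
  Finset.sum_nonneg fun _ _ => integral_nonneg fun _ => sq_nonneg _

theorem norm_ψ_le (i : Fin N) {x : ℝ} (hx : 0 ≤ x) :
    ‖P.ψ i x‖ ≤ (√(massOf P) + 1) * (kineticOf P + 1) ^ (1 / 4 : ℝ) := by
  set s := (kineticOf P + 1) ^ (1 / 4 : ℝ)
  have hs : 0 < s := rpow_pos_of_pos (by linarith [P.kineticOf_nonneg]) _
  have hs4 : s ^ 4 = kineticOf P + 1 := by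
    rw [← rpow_natCast, ← rpow_mul (by linarith [P.kineticOf_nonneg])]
    norm_num
  -- the window length `s⁻²` and the AM-GM weight `s⁻³` balance the three terms
  have h := norm_le_of_eq_add_integral (P.integrableOn_norm_ψ_sq i) (P.integrableOn_norm_ψ'_sq i)
    (P.deriv_locInt i) (P.fund_thm i) hx (inv_pos.2 (pow_pos hs 2)) (inv_pos.2 (pow_pos hs 3))
  have hmass : √((∫ y in Ioi 0, ‖P.ψ i y‖ ^ 2) / (s ^ 2)⁻¹) ≤ √(massOf P) * s := by
    rw [div_inv_eq_mul, sqrt_mul' _ (by positivity), sqrt_sq hs.le]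
    gcongr
    exact P.integral_norm_ψ_sq_le_massOf i
  have hkin : (s ^ 3)⁻¹ * (∫ y in Ioi 0, ‖P.ψ' i y‖ ^ 2) ≤ s := by
    rw [inv_mul_le_iff₀ (by positivity)]
    nlinarith [P.integral_norm_ψ'_sq_le_kineticOf i]
  have hwin : (s ^ 2)⁻¹ / (s ^ 3)⁻¹ = s := by field_simp
  linarith

theorem norm_vtx_sq_le (i : Fin N) :
    ‖P.vtx‖ ^ 2 ≤ (√(massOf P) + 1) ^ 2 * (kineticOf P + 1) ^ (1 / 2 : ℝ) := by
  have h := P.norm_ψ_le i le_rfl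
  rw [P.vertex i] at h
  calc ‖P.vtx‖ ^ 2 ≤ ((√(massOf P) + 1) * (kineticOf P + 1) ^ (1 / 4 : ℝ)) ^ 2 := by gcongr
    _ = _ := by
      rw [mul_pow, ← rpow_natCast ((kineticOf P + 1) ^ (1 / 4 : ℝ)) 2,
        ← rpow_mul (by linarith [P.kineticOf_nonneg])]
      norm_num

theorem potOf_le {μ : ℝ} (hμ : 0 ≤ μ) :
    potOf μ P ≤ (√(massOf P) + 1) ^ (2 * μ) * massOf P * (kineticOf P + 1) ^ (μ / 2) := by
  have hM : (√(massOf P) + 1) ^ (2 * μ) * (kineticOf P + 1) ^ (μ / 2)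
      = ((√(massOf P) + 1) * (kineticOf P + 1) ^ (1 / 4 : ℝ)) ^ (2 * μ) := by
    have hK : 0 ≤ kineticOf P + 1 := by linarith [P.kineticOf_nonneg]
    rw [mul_rpow (by positivity) (rpow_nonneg hK _), ← rpow_mul hK]
    ring_nf
  rw [mul_right_comm, hM, massOf, Finset.mul_sum]
  refine Finset.sum_le_sum fun i _ => integral_norm_rpow_add_two_le (by positivity)
    (P.integrableOn_norm_ψ_sq i) ?_
  filter_upwards [ae_restrict_mem measurableSet_Ioi] with x hx
  exact P.norm_ψ_le i (le_of_lt hx)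

end EnergyElem

/-- for `N ≥ 3`, `0 < μ < 2`, `α ∈ ℝ` and `m > 0`, the energy functional
restricted to the mass constraint `M[Ψ] = m` in the energy space `ℰ` is bounded from below. -/
theorem energy_bounded_below_subcritical (N : ℕ) (hN : 3 ≤ N) (μ α : ℝ)
    (hμ0 : 0 < μ) (hμ2 : μ < 2) (m : ℝ) (hm : 0 < m) :
    BddBelow {e : ℝ | ∃ P : EnergyElem N, massOf P = m ∧ e = energyOf μ α P} := by
  set c₁ := 1 / (2 * μ + 2) * ((√m + 1) ^ (2 * μ) * m)
  set c₂ := |α| / 2 * (√m + 1) ^ 2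
  obtain ⟨C₁, hC₁⟩ := exists_mul_rpow_le_add (c := 4 * c₁) (θ := μ / 2) (by positivity)
    (by positivity) (by linarith)
  obtain ⟨C₂, hC₂⟩ := exists_mul_rpow_le_add (c := 4 * c₂) (θ := 1 / 2) (by positivity)
    (by norm_num) (by norm_num)
  refine ⟨-(2 + C₁ + C₂) / 4, ?_⟩
  rintro _ ⟨P, hPm, rfl⟩
  have hK := P.kineticOf_nonneg
  have hpot : 1 / (2 * μ + 2) * potOf μ P ≤ c₁ * (kineticOf P + 1) ^ (μ / 2) := by
    have := P.potOf_le hμ0.le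
    rw [hPm] at this
    rw [mul_assoc]
    gcongr
  have hvtx : |α| / 2 * ‖P.vtx‖ ^ 2 ≤ c₂ * (kineticOf P + 1) ^ (1 / 2 : ℝ) := by
    have := P.norm_vtx_sq_le ⟨0, by omega⟩
    rw [hPm] at this
    rw [mul_assoc]
    gcongr
  have hα : -(|α| / 2 * ‖P.vtx‖ ^ 2) ≤ α / 2 * ‖P.vtx‖ ^ 2 := by
    rw [← neg_mul, ← neg_div]
    gcongr
    exact neg_abs_le α
  have h₁ := hC₁ (kineticOf P + 1) (by linarith)
  have h₂ := hC₂ (kineticOf P + 1) (by linarith)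
  rw [energyOf]
  linarith
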